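/- Let K be an integral domain (not necessarily Noetherian) and let K⟨X⟩ be a free K-algebra on a nonempty set X. Then no proper nonzero two-sided ideal I of K⟨X⟩ is free as a K-algebra, i.e. no such I is isomorphic as a K-algebra to a free K-algebra K⟨Y⟩ on any set Y. -/

import Mathlib

/-- The free non-unital associative `K`-algebra on `X`: the semigroup algebra of the free
semigroup `X⁺` over `K`. -/
abbrev FreeNUAlg (K X : Type*) [CommRing K] : Type _ := MonoidAlgebra K (FreeSemigroup X)

/-- The two-sided ideal (as a `K`-submodule closed under left and right multiplication)
generated by a set in a non-unital `K`-algebra. -/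
def idealSpan (K : Type*) {A : Type*} [CommRing K] [NonUnitalRing A] [Module K A]
    (s : Set A) : Submodule K A :=
  sInf {J : Submodule K A | s ⊆ J ∧ ∀ a b : A, b ∈ J → a * b ∈ J ∧ b * a ∈ J}

/-- A non-unital `K`-algebra is finitely generated if some finite subset generates it as a
`K`-algebra. -/
def NUAlgFG (K A : Type*) [CommRing K] [NonUnitalRing A] [Module K A]
    [IsScalarTower K A A] [SMulCommClass K A A] : Prop :=
  ∃ s : Finset A, NonUnitalAlgebra.adjoin K (s : Set A) = ⊤

/-- A non-unital `K`-algebra is finitely presented if it is isomorphic to the quotient of a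
free algebra `K⟨X⟩` on a finite set `X` by a finitely generated two-sided ideal, i.e. there
is a surjection from some `K⟨X⟩`, `X` finite, whose kernel is a finitely generated
two-sided ideal. -/
def NUAlgFP (K A : Type*) [CommRing K] [NonUnitalRing A] [Module K A]
    [IsScalarTower K A A] [SMulCommClass K A A] : Prop :=
  ∃ (n : ℕ) (f : FreeNUAlg K (Fin n) →ₙₐ[K] A),
    Function.Surjective f ∧
      ∃ s : Finset (FreeNUAlg K (Fin n)),
        ∀ x, f x = 0 ↔ x ∈ idealSpan K (s : Set (FreeNUAlg K (Fin n)))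

/-!
Suppose `f : K⟨Y⟩ ≃ I`. Since the letters generate `K⟨X⟩`, some letter `x` lies outside `I`,
and since `I ≠ 0`, `Y` has a letter `y`; put `b = f y`. Then `x b = f p` and `b x = f q` with
`y p = q y` in `K⟨Y⟩`, so every word of `p` ends in `y` and `p = c y + r y`. Hence
`(x - f r) b = c b`. Comparing coefficients at a shortest word of `b` gives `c = 0`, and as
`K⟨X⟩` has no zero divisors, `x = f r ∈ I`.
-/

open MonoidAlgebra (single single_mul_single smul_single)

namespace FreeSemigroup

variable {α : Type*}

def last (w : FreeSemigroup α) : α := (w.head :: w.tail).getLast (List.cons_ne_nil _ _)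

@[simp]
theorem last_of (a : α) : (of a).last = a := rfl

@[simp]
theorem last_mul (u v : FreeSemigroup α) : (u * v).last = v.last := by
  simp [last, List.getLast_append_of_ne_nil]

theorem eq_of_last_or_exists_mul_of_last (w : FreeSemigroup α) :
    w = of w.last ∨ ∃ v, w = v * of w.last := by
  induction w using FreeSemigroup.recOnMul with
  | ih1 a => exact .inl rfl
  | ih2 a w _ ih =>
    rw [last_mul]
    rcases ih with hw | ⟨v, hw⟩
    · exact .inr ⟨of a, by rw [← hw]⟩
    · exact .inr ⟨of a * v, by rw [mul_assoc, ← hw]⟩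

theorem length_lt_length_mul (u v : FreeSemigroup α) : v.length < (u * v).length := by
  rw [length_mul]
  exact Nat.lt_add_of_pos_left (Nat.succ_pos _)

instance : IsCancelMul (FreeSemigroup α) :=
  toFreeMonoid_injective.isCancelMul _ (map_mul toFreeMonoid)

instance [IsEmpty α] : IsEmpty (FreeSemigroup α) :=
  ⟨fun w => isEmptyElim w.head⟩

instance : UniqueProds (FreeSemigroup α) :=
  .of_injective_mulHom toFreeMonoid toFreeMonoid_injective inferInstance

end FreeSemigroup

instance {K M : Type*} [Semiring K] [IsEmpty M] : Subsingleton (MonoidAlgebra K M) :=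
  MonoidAlgebra.coeffEquiv.subsingleton

open FreeSemigroup

namespace FreeNUAlg

variable {K X : Type*}

theorem subalgebra_eq_top_of_single_of_mem [CommSemiring K]
    (S : NonUnitalSubalgebra K (MonoidAlgebra K (FreeSemigroup X)))
    (h : ∀ x, single (of x) (1 : K) ∈ S) : S = ⊤ := by
  have hsingle (w : FreeSemigroup X) : ∀ c : K, single w c ∈ S := by
    induction w using FreeSemigroup.recOnMul with
    | ih1 a => exact fun c => by simpa [smul_single] using S.smul_mem c (h a)
    | ih2 a v iha ihv =>
      exact fun c => by simpa [single_mul_single] using S.mul_mem (iha c) (ihv 1)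
  exact eq_top_iff.2 fun p _ =>
    MonoidAlgebra.induction_linear p S.zero_mem (fun _ _ => S.add_mem) hsingle

theorem mem_supported_last_of_single_mul_eq [Semiring K] {y : X}
    {p q : MonoidAlgebra K (FreeSemigroup X)}
    (h : single (of y) (1 : K) * p = q * single (of y) 1) :
    p ∈ MonoidAlgebra.supported K K {w | w.last = y} := by
  classical
  intro w hw
  have : of y * w ∈ (q * single (of y) (1 : K)).coeff.support := by
    rw [← h, MonoidAlgebra.support_coeff_single_mul _ _ (by simp)]
    exact Finset.mem_map_of_mem _ hw
  obtain ⟨u, -, hu⟩ :=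
    Finset.mem_image.1 (MonoidAlgebra.support_coeff_mul_single_subset _ _ _ this)
  simpa using congrArg last hu.symm

theorem supported_last_le [CommSemiring K] (y : X) :
    MonoidAlgebra.supported K K {w : FreeSemigroup X | w.last = y} ≤
      K ∙ single (of y) (1 : K) ⊔
        LinearMap.range (LinearMap.mulRight K (single (of y) (1 : K))) := by
  rw [MonoidAlgebra.supported_eq_span_single, Submodule.span_le]
  rintro _ ⟨w, hwy : w.last = y, rfl⟩
  rcases eq_of_last_or_exists_mul_of_last w with hw | ⟨v, hw⟩ <;> rw [hwy] at hw <;> subst hw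
  · exact Submodule.mem_sup_left (Submodule.mem_span_singleton_self _)
  · exact Submodule.mem_sup_right ⟨single v 1, by simp [single_mul_single]⟩

theorem exists_eq_smul_add_mul_of_single_mul_eq [CommSemiring K] {y : X}
    {p q : MonoidAlgebra K (FreeSemigroup X)}
    (h : single (of y) (1 : K) * p = q * single (of y) 1) :
    ∃ (c : K) (r : MonoidAlgebra K (FreeSemigroup X)),
      p = c • single (of y) 1 + r * single (of y) 1 := by
  obtain ⟨_, hs, _, ⟨r, rfl⟩, hp⟩ :=
    Submodule.mem_sup.1 (supported_last_le y (mem_supported_last_of_single_mul_eq h))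
  obtain ⟨c, rfl⟩ := Submodule.mem_span_singleton.1 hs
  exact ⟨c, r, hp.symm⟩

theorem eq_zero_of_mul_eq_smul [Semiring K] [NoZeroDivisors K]
    {g b : MonoidAlgebra K (FreeSemigroup X)} {c : K} (h : g * b = c • b) (hb : b ≠ 0) :
    c = 0 := by
  classical
  obtain ⟨w, hw, hmin⟩ := b.coeff.support.exists_min_image length
    (Finsupp.support_nonempty_iff.2 (by simpa using hb))
  by_contra hc
  have : w ∈ (g * b).coeff.support := by
    rw [h, Finsupp.mem_support_iff, MonoidAlgebra.coeff_smul_apply, smul_eq_mul]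
    exact mul_ne_zero hc (Finsupp.mem_support_iff.1 hw)
  obtain ⟨u, -, v, hv, rfl⟩ :=
    Finset.mem_mul.1 (MonoidAlgebra.support_coeff_mul_subset g b this)
  exact (hmin v hv).not_gt (length_lt_length_mul u v)

end FreeNUAlg

open FreeNUAlg in
theorem ideal_of_free_algebra_not_free_general
    (K X : Type*) [CommRing K] [IsDomain K]
    (I : NonUnitalSubalgebra K (FreeNUAlg K X))
    (hIl : ∀ a b : FreeNUAlg K X, b ∈ I → a * b ∈ I)
    (hIr : ∀ a b : FreeNUAlg K X, b ∈ I → b * a ∈ I)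
    (hne_bot : I.toSubmodule ≠ ⊥) (hne_top : I.toSubmodule ≠ ⊤)
    (Y : Type*) :
    ¬ ∃ f : FreeNUAlg K Y →ₙₐ[K] I, Function.Bijective f := by
  rintro ⟨f, hf⟩
  obtain ⟨x, hx⟩ : ∃ x : X, single (of x) (1 : K) ∉ I := by
    by_contra! h
    exact hne_top (NonUnitalAlgebra.toSubmodule_eq_top.2 (subalgebra_eq_top_of_single_of_mem I h))
  obtain ⟨y⟩ : Nonempty Y := by
    by_contra! hY
    have : Subsingleton I := hf.2.subsingleton
    exact hne_bot Submodule.eq_bot_of_subsingleton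
  set b : FreeNUAlg K X := ↑(f (single (of y) 1))
  have hb : b ≠ 0 := by simp [b, map_ne_zero_iff f hf.1]
  obtain ⟨p, hp⟩ := hf.2 ⟨single (of x) 1 * b, hIl _ _ (f _).2⟩
  obtain ⟨q, hq⟩ := hf.2 ⟨b * single (of x) 1, hIr _ _ (f _).2⟩
  obtain ⟨c, r, rfl⟩ := exists_eq_smul_add_mul_of_single_mul_eq (y := y) (p := p) (q := q) <|
    hf.1 <| Subtype.ext <| by simp [hp, hq, b, mul_assoc]
  have hxb : single (of x) 1 * b = c • b + (f r : FreeNUAlg K X) * b := by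
    rw [map_add, map_smul, map_mul] at hp
    exact (congrArg Subtype.val hp).symm
  have hcb : (single (of x) (1 : K) - (f r : FreeNUAlg K X)) * b = c • b := by
    rw [sub_mul, hxb, add_sub_cancel_right]
  obtain rfl := eq_zero_of_mul_eq_smul hcb hb
  have hxr : single (of x) 1 = (f r : FreeNUAlg K X) :=
    sub_eq_zero.1 ((mul_eq_zero.1 (hcb.trans (zero_smul K b))).resolve_right hb)
  exact hx (hxr ▸ (f r).2)

/-- Let `K` be an integral domain (not necessarily Noetherian) and
`K⟨X⟩` the free `K`-algebra on a nonempty set `X`. Then no proper nonzero two-sided ideal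
`I` of `K⟨X⟩` (a `K`-subalgebra closed under left and right multiplication by arbitrary
elements) is free as a `K`-algebra, i.e. there is no `K`-algebra isomorphism (bijective
homomorphism) from a free `K`-algebra `K⟨Y⟩` on any set `Y` onto `I`. -/
theorem ideal_of_free_algebra_not_free
    (K X : Type*) [CommRing K] [IsDomain K] [Nonempty X]
    (I : NonUnitalSubalgebra K (FreeNUAlg K X))
    (hIl : ∀ a b : FreeNUAlg K X, b ∈ I → a * b ∈ I)
    (hIr : ∀ a b : FreeNUAlg K X, b ∈ I → b * a ∈ I)
    (hne_bot : I.toSubmodule ≠ ⊥) (hne_top : I.toSubmodule ≠ ⊤)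
    (Y : Type*) :
    ¬ ∃ f : FreeNUAlg K Y →ₙₐ[K] I, Function.Bijective f :=
  ideal_of_free_algebra_not_free_general K X I hIl hIr hne_bot hne_top Y
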